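/- arXiv:2010.09153 — 2 statements merged into one kernel-verified Lean document; each statement's English description precedes it below -/
import Mathlib

section
/- Let A be an n×n real symmetric positive definite matrix. Let x, ξ, φ : ℝ → ℝⁿ and λ : ℝ → ℝ be curves, each differentiable at t = 0, such that for all t: ⟨A⁻¹x(t), x(t)⟩ = 1, ⟨A⁻¹x(t), ξ(t)⟩ = 0, ‖ξ(t)‖ = 1, ‖φ(t)‖ = 1 and L(x(t), ξ(t)) φ(t) = λ(t) φ(t), and assume ⟨φ(0), ξ(0)⟩ = 0. Then the first variation of the eigenvalue is λ'(0) = −2 ( ⟨ξ'(0), φ(0)⟩ · ⟨(A − x(0) x(0)ᵀ) φ(0), ξ(0)⟩ + ⟨x'(0), φ(0)⟩ · ⟨x(0), φ(0)⟩ ). -/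
/-!
For a unit eigenvector `φ` of `L = P_ξ (A - x xᵀ) P_ξ` we have `λ = ⟨L φ, φ⟩ = ⟨A g, g⟩ - ⟨x, g⟩²`
with `g = P_ξ φ`, and `g(0) = φ(0)` since `φ(0) ⊥ ξ(0)`. As `A` is symmetric, differentiating
gives `λ'(0) = 2 ⟨g'(0), (A - x xᵀ) φ⟩ - 2 ⟨x', φ⟩ ⟨x, φ⟩`. The eigen-equation at `0` says
`(A - x xᵀ) φ = λ φ + ν ξ` with `ν = ⟨ξ, (A - x xᵀ) φ⟩`, and `g'(0) = φ' - (⟨ξ', φ⟩ + ⟨ξ, φ'⟩) ξ`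
is orthogonal to `φ` (as `‖φ‖ ≡ 1`) while `⟨g'(0), ξ⟩ = -⟨ξ', φ⟩` (as `‖ξ‖ ≡ 1`).
-/

open Matrix

/-- The orthogonal projection onto the hyperplane orthogonal to a unit vector `ξ`:
`P_ξ = I - ξ ξᵀ`. -/
noncomputable def projPerp {n : ℕ} (ξ : Fin n → ℝ) : Matrix (Fin n) (Fin n) ℝ :=
  1 - vecMulVec ξ ξ

/-- Moser's Lax matrix `L(x, ξ) = P_ξ (A - x xᵀ) P_ξ`. -/
noncomputable def moserLax {n : ℕ} (A : Matrix (Fin n) (Fin n) ℝ) (x ξ : Fin n → ℝ) :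
    Matrix (Fin n) (Fin n) ℝ :=
  projPerp ξ * (A - vecMulVec x x) * projPerp ξ

section Calculus

variable {ι : Type*} [Fintype ι] {u v : ℝ → ι → ℝ} {u' v' : ι → ℝ} {t : ℝ}

theorem HasDerivAt.dotProduct (hu : HasDerivAt u u' t) (hv : HasDerivAt v v' t) :
    HasDerivAt (fun s => u s ⬝ᵥ v s) (u' ⬝ᵥ v t + u t ⬝ᵥ v') t := by
  simp only [_root_.dotProduct, ← Finset.sum_add_distrib]
  exact HasDerivAt.fun_sum fun i _ => (hasDerivAt_pi.1 hu i).mul (hasDerivAt_pi.1 hv i)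

theorem HasDerivAt.const_mulVec (A : Matrix ι ι ℝ) (hu : HasDerivAt u u' t) :
    HasDerivAt (fun s => A *ᵥ u s) (A *ᵥ u') t := by
  rw [hasDerivAt_pi] at hu ⊢
  simp only [mulVec, _root_.dotProduct]
  exact fun i => HasDerivAt.fun_sum fun j _ => (hu j).const_mul (A i j)

theorem HasDerivAt.dotProduct_mulVec_self {A : Matrix ι ι ℝ} (hA : A.IsSymm)
    (hu : HasDerivAt u u' t) :
    HasDerivAt (fun s => u s ⬝ᵥ A *ᵥ u s) (2 * (u' ⬝ᵥ A *ᵥ u t)) t := by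
  refine (hu.dotProduct (hu.const_mulVec A)).congr_deriv ?_
  rw [← dotProduct_transpose_mulVec A u' (u t), hA.eq]
  ring

theorem HasDerivAt.dotProduct_eq_zero_of_dotProduct_self_const {c : ℝ}
    (hu : HasDerivAt u u' t) (h : ∀ s, u s ⬝ᵥ u s = c) : u t ⬝ᵥ u' = 0 := by
  have h' := hu.dotProduct hu
  simp_rw [h, dotProduct_comm u'] at h'
  linarith [(hasDerivAt_const t c).unique h']

end Calculus

theorem eq_dotProduct_mulVec_of_mulVec_eq_smul {ι : Type*} [Fintype ι] {M : Matrix ι ι ℝ}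
    {v : ι → ℝ} {μ : ℝ} (hv : v ⬝ᵥ v = 1) (h : M *ᵥ v = μ • v) : μ = v ⬝ᵥ M *ᵥ v := by
  rw [h, dotProduct_smul, hv, smul_eq_mul, mul_one]

section MoserLax

variable {n : ℕ}

theorem projPerp_mulVec (ξ v : Fin n → ℝ) : projPerp ξ *ᵥ v = v - (ξ ⬝ᵥ v) • ξ := by
  rw [projPerp, sub_mulVec, one_mulVec, vecMulVec_mulVec, op_smul_eq_smul]

theorem projPerp_isSymm (ξ : Fin n → ℝ) : (projPerp ξ).IsSymm := by
  simp [projPerp, IsSymm, transpose_vecMulVec]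

theorem dotProduct_moserLax_mulVec (A : Matrix (Fin n) (Fin n) ℝ) (x ξ v : Fin n → ℝ) :
    v ⬝ᵥ moserLax A x ξ *ᵥ v =
      projPerp ξ *ᵥ v ⬝ᵥ A *ᵥ (projPerp ξ *ᵥ v) - (x ⬝ᵥ projPerp ξ *ᵥ v) ^ 2 := by
  rw [moserLax, ← mulVec_mulVec, ← mulVec_mulVec, ← (projPerp_isSymm ξ).eq,
    dotProduct_transpose_mulVec, (projPerp_isSymm ξ).eq, sub_mulVec, sub_dotProduct,
    vecMulVec_mulVec, op_smul_eq_smul, smul_dotProduct, smul_eq_mul,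
    dotProduct_comm (A *ᵥ _)]
  ring

theorem HasDerivAt.projPerp_mulVec {ξ v : ℝ → Fin n → ℝ} {ξ' v' : Fin n → ℝ} {t : ℝ}
    (hξ : HasDerivAt ξ ξ' t) (hv : HasDerivAt v v' t) :
    HasDerivAt (fun s => projPerp (ξ s) *ᵥ v s)
      (v' - ((ξ t ⬝ᵥ v t) • ξ' + (ξ' ⬝ᵥ v t + ξ t ⬝ᵥ v') • ξ t)) t := by
  simp_rw [_root_.projPerp_mulVec]
  exact hv.sub ((hξ.dotProduct hv).fun_smul hξ)

theorem sub_vecMulVec_mulVec_of_moserLax_mulVec_eq_smul {A : Matrix (Fin n) (Fin n) ℝ}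
    {x ξ v : Fin n → ℝ} {μ : ℝ} (hv : ξ ⬝ᵥ v = 0) (h : moserLax A x ξ *ᵥ v = μ • v) :
    (A - vecMulVec x x) *ᵥ v = μ • v + (ξ ⬝ᵥ (A - vecMulVec x x) *ᵥ v) • ξ := by
  rw [moserLax, ← mulVec_mulVec, ← mulVec_mulVec, projPerp_mulVec ξ v, hv, zero_smul, sub_zero,
    projPerp_mulVec] at h
  rw [← h, sub_add_cancel]

theorem hasDerivAt_moserLax_eigenvalue {A : Matrix (Fin n) (Fin n) ℝ} (hA : A.IsSymm)
    {x ξ φ : ℝ → Fin n → ℝ} {lam : ℝ → ℝ} {x' ξ' φ' : Fin n → ℝ} {t : ℝ}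
    (hx : HasDerivAt x x' t) (hξ : HasDerivAt ξ ξ' t) (hφ : HasDerivAt φ φ' t)
    (hφ_unit : ∀ s, φ s ⬝ᵥ φ s = 1)
    (heig : ∀ s, moserLax A (x s) (ξ s) *ᵥ φ s = lam s • φ s) (hξφ : ξ t ⬝ᵥ φ t = 0) :
    HasDerivAt lam
      (2 * ((φ' - (ξ' ⬝ᵥ φ t + ξ t ⬝ᵥ φ') • ξ t) ⬝ᵥ (A - vecMulVec (x t) (x t)) *ᵥ φ t)
        - 2 * (x' ⬝ᵥ φ t) * (x t ⬝ᵥ φ t)) t := by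
  have hlam : lam = fun s => projPerp (ξ s) *ᵥ φ s ⬝ᵥ A *ᵥ (projPerp (ξ s) *ᵥ φ s)
      - (x s ⬝ᵥ projPerp (ξ s) *ᵥ φ s) ^ 2 := funext fun s => by
    rw [eq_dotProduct_mulVec_of_mulVec_eq_smul (hφ_unit s) (heig s), dotProduct_moserLax_mulVec]
  have hPφ : projPerp (ξ t) *ᵥ φ t = φ t := by rw [projPerp_mulVec, hξφ, zero_smul, sub_zero]
  have hg := hξ.projPerp_mulVec hφ
  rw [hlam]
  refine ((hg.dotProduct_mulVec_self hA).fun_sub ((hx.dotProduct hg).fun_pow 2)).congr_deriv ?_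
  rw [hPφ, hξφ, zero_smul, zero_add, sub_mulVec, vecMulVec_mulVec, op_smul_eq_smul,
    dotProduct_sub _ (A *ᵥ φ t), dotProduct_smul, smul_eq_mul, dotProduct_comm _ (x t)]
  ring

end MoserLax

theorem sub_smul_dotProduct_smul_add_smul {ι : Type*} [Fintype ι] {ξ φ ξ' φ' : ι → ℝ}
    (hξ : ξ ⬝ᵥ ξ = 1) (hξφ : ξ ⬝ᵥ φ = 0) (hφφ' : φ ⬝ᵥ φ' = 0) (μ ν : ℝ) :
    (φ' - (ξ' ⬝ᵥ φ + ξ ⬝ᵥ φ') • ξ) ⬝ᵥ (μ • φ + ν • ξ) = -(ξ' ⬝ᵥ φ) * ν := by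
  simp only [sub_dotProduct, dotProduct_add, smul_dotProduct, dotProduct_smul, smul_eq_mul, hξ,
    hξφ, dotProduct_comm φ' φ, hφφ', dotProduct_comm φ' ξ]
  ring

theorem stmt5_general {n : ℕ} (A : Matrix (Fin n) (Fin n) ℝ) (hA : A.PosDef)
    (x ξ φ : ℝ → (Fin n → ℝ)) (lam : ℝ → ℝ)
    (xd ξd : Fin n → ℝ) (lamd : ℝ)
    (hx : HasDerivAt x xd 0) (hξ : HasDerivAt ξ ξd 0)
    (hφ : DifferentiableAt ℝ φ 0) (hlam : HasDerivAt lam lamd 0)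
    (h3 : ∀ t, ξ t ⬝ᵥ ξ t = 1)
    (h4 : ∀ t, φ t ⬝ᵥ φ t = 1)
    (h5 : ∀ t, (moserLax A (x t) (ξ t)).mulVec (φ t) = lam t • φ t)
    (h6 : φ 0 ⬝ᵥ ξ 0 = 0) :
    lamd = -2 * ((ξd ⬝ᵥ φ 0) * ((A - vecMulVec (x 0) (x 0)).mulVec (φ 0) ⬝ᵥ ξ 0)
      + (xd ⬝ᵥ φ 0) * (x 0 ⬝ᵥ φ 0)) := by
  obtain ⟨φd, hφd⟩ : ∃ φd, HasDerivAt φ φd 0 := ⟨_, hφ.hasDerivAt⟩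
  have hξφ : ξ 0 ⬝ᵥ φ 0 = 0 := by rwa [dotProduct_comm]
  have hφφd : φ 0 ⬝ᵥ φd = 0 := hφd.dotProduct_eq_zero_of_dotProduct_self_const h4
  have hlam' := hasDerivAt_moserLax_eigenvalue (isHermitian_iff_isSymm.1 hA.isHermitian)
    hx hξ hφd h4 h5 hξφ
  have hvar := sub_smul_dotProduct_smul_add_smul (ξ' := ξd) (h3 0) hξφ hφφd (lam 0)
    (ξ 0 ⬝ᵥ (A - vecMulVec (x 0) (x 0)) *ᵥ φ 0)
  rw [← sub_vecMulVec_mulVec_of_moserLax_mulVec_eq_smul hξφ (h5 0)] at hvar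
  rw [hlam.unique hlam', hvar, dotProduct_comm (ξ 0)]
  ring

/-- First variation of an eigenvalue of Moser's Lax matrix along a curve
`(x(t), ξ(t))` in `S*E_A` with unit eigenvector branch `φ(t)`, `φ(0) ⊥ ξ(0)`:
`λ'(0) = -2 (⟨ξ'(0), φ(0)⟩⟨(A - x(0)x(0)ᵀ)φ(0), ξ(0)⟩ + ⟨x'(0), φ(0)⟩⟨x(0), φ(0)⟩)`. -/
theorem stmt5 {n : ℕ} (A : Matrix (Fin n) (Fin n) ℝ) (hA : A.PosDef)
    (x ξ φ : ℝ → (Fin n → ℝ)) (lam : ℝ → ℝ)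
    (xd ξd : Fin n → ℝ) (lamd : ℝ)
    (hx : HasDerivAt x xd 0) (hξ : HasDerivAt ξ ξd 0)
    (hφ : DifferentiableAt ℝ φ 0) (hlam : HasDerivAt lam lamd 0)
    (h1 : ∀ t, A⁻¹.mulVec (x t) ⬝ᵥ x t = 1)
    (h2 : ∀ t, A⁻¹.mulVec (x t) ⬝ᵥ ξ t = 0)
    (h3 : ∀ t, ξ t ⬝ᵥ ξ t = 1)
    (h4 : ∀ t, φ t ⬝ᵥ φ t = 1)
    (h5 : ∀ t, (moserLax A (x t) (ξ t)).mulVec (φ t) = lam t • φ t)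
    (h6 : φ 0 ⬝ᵥ ξ 0 = 0) :
    lamd = -2 * ((ξd ⬝ᵥ φ 0) * ((A - vecMulVec (x 0) (x 0)).mulVec (φ 0) ⬝ᵥ ξ 0)
      + (xd ⬝ᵥ φ 0) * (x 0 ⬝ᵥ φ 0)) :=
  stmt5_general A hA x ξ φ lam xd ξd lamd hx hξ hφ hlam h3 h4 h5 h6
end

section
/- Let A be an n×n real symmetric matrix, let z ∈ ℝ be a nonzero number that is not an eigenvalue of A, let x ∈ ℝⁿ, and let ξ ∈ ℝⁿ be a unit vector. Then z is an eigenvalue of L(x, ξ) if and only if Q_z(x, ξ)² = Q_z(ξ) (1 + Q_z(x)), where Q_z(u, v) = ⟨(z I − A)⁻¹ u, v⟩ and Q_z(u) = Q_z(u, u); equivalently, if and only if the quadratic equation expressing tangency of the line {x + tξ : t ∈ ℝ} to the confocal quadric {y : ⟨(A − z I)⁻¹ y, y⟩ = −1} has vanishing discriminant. -/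
/-! Write `B = A - x xᵀ` and `P = P_ξ`. Since `P² = P`, the Lax matrix `L = P B P` has the same
characteristic polynomial as `B P`, and `zI - B P = (zI - A) + x xᵀ + (B ξ) ξᵀ` is a rank-two
perturbation of the invertible matrix `zI - A`. By the matrix determinant lemma,
`det (zI - L) = det (zI - A) · det (I₂ + K)` with `K` the `2 × 2` matrix of values of `Q_z` on
`x, B ξ` against `x, ξ`; using `Q_z(A u, v) = z Q_z(u, v) - ⟨u, v⟩` this determinant collapses to
`z (Q_z(ξ) (1 + Q_z(x)) - Q_z(x, ξ)²)`. -/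

open Matrix

/-- The confocal quadratic form `Q_z(u, v) = ⟨(zI - A)⁻¹ u, v⟩`. -/
noncomputable def confocalQ {n : ℕ} (A : Matrix (Fin n) (Fin n) ℝ) (z : ℝ)
    (u v : Fin n → ℝ) : ℝ :=
  (z • (1 : Matrix (Fin n) (Fin n) ℝ) - A)⁻¹.mulVec u ⬝ᵥ v

namespace Matrix

variable {m n R : Type*} [CommRing R]

theorem mem_spectrum_iff_det_smul_one_sub_eq_zero [Fintype n] [DecidableEq n] {K : Type*}
    [Field K] (M : Matrix n n K) (z : K) : z ∈ spectrum K M ↔ (z • 1 - M).det = 0 := by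
  rw [spectrum.mem_iff, Algebra.algebraMap_eq_smul_one, isUnit_iff_isUnit_det, isUnit_iff_ne_zero,
    not_not]

theorem det_smul_one_sub_mul_comm [Fintype n] [DecidableEq n] (X Y : Matrix n n R) (z : R) :
    (z • 1 - X * Y).det = (z • 1 - Y * X).det := by
  have h := congrArg (Polynomial.eval z) (charpoly_mul_comm X Y)
  rwa [eval_charpoly, eval_charpoly, scalar_apply, ← smul_one_eq_diagonal] at h

theorem vecMulVec_add_vecMulVec (u₁ u₂ v₁ v₂ : n → R) :
    vecMulVec u₁ v₁ + vecMulVec u₂ v₂ = (of ![u₁, u₂])ᵀ * of ![v₁, v₂] := by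
  ext i j
  simp [mul_apply, Fin.sum_univ_two, vecMulVec_apply]

theorem of_mul_mul_transpose_of_apply [Fintype n] (V U : m → n → R) (N : Matrix n n R)
    (i j : m) : (of V * N * (of U)ᵀ) i j = (N *ᵥ U j) ⬝ᵥ V i := by
  rw [dotProduct_comm, dotProduct_mulVec]
  rfl

end Matrix

section MoserLax

variable {n : ℕ} {A : Matrix (Fin n) (Fin n) ℝ} {x ξ : Fin n → ℝ} {z : ℝ}

theorem projPerp_mul_self (hξ : ξ ⬝ᵥ ξ = 1) : projPerp ξ * projPerp ξ = projPerp ξ := by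
  simp only [projPerp, sub_mul, mul_sub, Matrix.one_mul, Matrix.mul_one, vecMulVec_mul_vecMulVec,
    hξ, one_smul]
  abel

theorem det_smul_one_sub_moserLax_eq_det_sub_mul_projPerp (hξ : ξ ⬝ᵥ ξ = 1) :
    (z • 1 - moserLax A x ξ).det = (z • 1 - (A - vecMulVec x x) * projPerp ξ).det := by
  rw [moserLax, Matrix.mul_assoc, det_smul_one_sub_mul_comm, Matrix.mul_assoc,
    projPerp_mul_self hξ]

theorem smul_one_sub_mul_projPerp :
    z • 1 - (A - vecMulVec x x) * projPerp ξ =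
      (z • 1 - A) + (of ![x, (A - vecMulVec x x) *ᵥ ξ])ᵀ * of ![x, ξ] := by
  rw [← vecMulVec_add_vecMulVec, projPerp, Matrix.mul_sub, Matrix.mul_one, mul_vecMulVec]
  abel

theorem confocalQ_comm (hA : Aᵀ = A) (u v : Fin n → ℝ) :
    confocalQ A z u v = confocalQ A z v u := by
  rw [confocalQ, confocalQ, dotProduct_comm, dotProduct_mulVec, ← mulVec_transpose,
    transpose_nonsing_inv, transpose_sub, transpose_smul, transpose_one, hA]

theorem confocalQ_mulVec (hz : IsUnit (z • 1 - A).det) (u v : Fin n → ℝ) :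
    confocalQ A z (A *ᵥ u) v = z * confocalQ A z u v - u ⬝ᵥ v := by
  set M := z • (1 : Matrix (Fin n) (Fin n) ℝ) - A with hM
  have hinv : M⁻¹ * A = z • M⁻¹ - 1 := by
    have hA : A = z • 1 - M := by rw [hM, sub_sub_cancel]
    rw [hA, Matrix.mul_sub, Matrix.mul_smul, Matrix.mul_one, nonsing_inv_mul _ hz]
  rw [confocalQ, confocalQ, ← hM, mulVec_mulVec, hinv, sub_mulVec, smul_mulVec, one_mulVec,
    sub_dotProduct, smul_dotProduct, smul_eq_mul]

theorem confocalQ_sub_vecMulVec_mulVec (hz : IsUnit (z • 1 - A).det) (v : Fin n → ℝ) :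
    confocalQ A z ((A - vecMulVec x x) *ᵥ ξ) v =
      z * confocalQ A z ξ v - ξ ⬝ᵥ v - (x ⬝ᵥ ξ) * confocalQ A z x v := by
  rw [sub_mulVec, vecMulVec_mulVec, confocalQ, mulVec_sub, sub_dotProduct, ← confocalQ,
    confocalQ_mulVec hz, mulVec_smul, smul_dotProduct, ← confocalQ, op_smul_eq_mul,
    mul_comm _ (x ⬝ᵥ ξ)]

theorem det_smul_one_sub_moserLax (hA : Aᵀ = A) (hz : IsUnit (z • 1 - A).det)
    (hξ : ξ ⬝ᵥ ξ = 1) :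
    (z • 1 - moserLax A x ξ).det = (z • 1 - A).det *
      (z * (confocalQ A z ξ ξ * (1 + confocalQ A z x x) - confocalQ A z x ξ ^ 2)) := by
  rw [det_smul_one_sub_moserLax_eq_det_sub_mul_projPerp hξ, smul_one_sub_mul_projPerp,
    det_add_mul _ _ hz, det_fin_two]
  simp only [Matrix.add_apply, of_mul_mul_transpose_of_apply, one_fin_two, of_apply,
    cons_val_zero, cons_val_one, zero_add, ← confocalQ.eq_1]
  rw [confocalQ_sub_vecMulVec_mulVec hz, confocalQ_sub_vecMulVec_mulVec hz, confocalQ_comm hA ξ x,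
    hξ, dotProduct_comm ξ x]
  ring

end MoserLax

/-- For `z ≠ 0` not an eigenvalue of the symmetric matrix `A`, `z` is an eigenvalue
of `L(x, ξ)` if and only if `Q_z(x, ξ)² = Q_z(ξ)(1 + Q_z(x))`, the tangency
condition of the line through `x` with direction `ξ` to the confocal quadric. -/
theorem stmt10 {n : ℕ} (A : Matrix (Fin n) (Fin n) ℝ) (hA : Aᵀ = A)
    (z : ℝ) (hz0 : z ≠ 0) (hz : z ∉ spectrum ℝ A)
    (x ξ : Fin n → ℝ) (hξ : ξ ⬝ᵥ ξ = 1) :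
    z ∈ spectrum ℝ (moserLax A x ξ) ↔
      (confocalQ A z x ξ) ^ 2 = confocalQ A z ξ ξ * (1 + confocalQ A z x x) := by
  have hdet : IsUnit (z • 1 - A).det :=
    isUnit_iff_ne_zero.mpr ((mem_spectrum_iff_det_smul_one_sub_eq_zero A z).not.mp hz)
  rw [mem_spectrum_iff_det_smul_one_sub_eq_zero, det_smul_one_sub_moserLax hA hdet hξ,
    mul_eq_zero, mul_eq_zero, or_iff_right hdet.ne_zero, or_iff_right hz0, sub_eq_zero, eq_comm]
end
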